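/- Under the two-class Gaussian mixture model and growth assumptions, the cross term κ_n = (4/(n√p))·(μ₂ − μ₁)ᵀ·(−c₂·Σ_{i≤n₁} ω_i + c₁·Σ_{i>n₁} ω_i) converges to 0 almost surely as n → ∞. -/

import Mathlib

/-!
`κ_n` is a linear combination `∑ a_{ij} z_{ij}` of the independent standard Gaussians, with
`a_{ij} = 4 w_i (C_{a(i)}^{1/2} (μ₂ - μ₁))_j / (n p)` and class weights `w_i ∈ {-c₂, c₁}`.
Hence `E κ_n² = ∑ a_{ij}² ≤ 16 ‖C‖ ‖μ₂ - μ₁‖² / (n p²) = O(n⁻³)` because `p ≍ n`. The second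
moments being summable, `∑ κ_n²` is finite almost surely, so `κ_n → 0` almost surely.
-/

open MeasureTheory ProbabilityTheory Matrix Filter Finset
open scoped Topology NNReal

noncomputable section

namespace LSSVM

/-- Squared Euclidean norm of a vector in `ℝ^m`. -/
def sq {m : ℕ} (v : Fin m → ℝ) : ℝ := ∑ j, v j ^ 2

/-- All-ones vector. -/
def ones (n : ℕ) : Fin n → ℝ := fun _ => 1

/-- Centering projection matrix `P = I - 1 1ᵀ / n`. -/
def Pmat (n : ℕ) : Matrix (Fin n) (Fin n) ℝ :=
  1 - (n : ℝ)⁻¹ • Matrix.of (fun _ _ => (1 : ℝ))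

/-- Parameters of the two-class mixture model at a given total sample size:
dimension `p`, class sizes `n₁, n₂`, class means `μ₁, μ₂` and the square roots
`R₁ = C₁^{1/2}`, `R₂ = C₂^{1/2}` of the class covariance matrices. -/
structure Model where
  p : ℕ
  n₁ : ℕ
  n₂ : ℕ
  μ₁ : Fin p → ℝ
  μ₂ : Fin p → ℝ
  R₁ : Matrix (Fin p) (Fin p) ℝ
  R₂ : Matrix (Fin p) (Fin p) ℝ

namespace Model

variable {Ω : Type*}

/-- Noise vector `ω_i = p^{-1/2} C_{a(i)}^{1/2} z_i` of training point `i`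
(class 1 iff `i < n₁`), built from row `i` of the Gaussian array `z`. -/
def omega (M : Model) (z : ℕ → ℕ → Ω → ℝ) (i : ℕ) (w : Ω) : Fin M.p → ℝ :=
  (Real.sqrt M.p)⁻¹ • (if i < M.n₁ then M.R₁ else M.R₂).mulVec fun j => z i (j : ℕ) w

/-- Training data point `x_i = μ_{a(i)} + √p · ω_i`. -/
def x (M : Model) (z : ℕ → ℕ → Ω → ℝ) (i : ℕ) (w : Ω) : Fin M.p → ℝ :=
  (if i < M.n₁ then M.μ₁ else M.μ₂) + Real.sqrt M.p • M.omega z i w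

/-- Sample mean of the `n` training points. -/
def xbar (M : Model) (z : ℕ → ℕ → Ω → ℝ) (n : ℕ) (w : Ω) : Fin M.p → ℝ :=
  (n : ℝ)⁻¹ • ∑ i ∈ Finset.range n, M.x z i w

/-- Noise vector of the new datum of class `a` (`a = 0` means class 1, `a = 1` class 2),
built from the independent row `n` of the Gaussian array. -/
def omegaNew (M : Model) (a : Fin 2) (z : ℕ → ℕ → Ω → ℝ) (n : ℕ) (w : Ω) : Fin M.p → ℝ :=
  (Real.sqrt M.p)⁻¹ • (if a = 0 then M.R₁ else M.R₂).mulVec fun j => z n (j : ℕ) w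

/-- The new datum of class `a`. -/
def xNew (M : Model) (a : Fin 2) (z : ℕ → ℕ → Ω → ℝ) (n : ℕ) (w : Ω) : Fin M.p → ℝ :=
  (if a = 0 then M.μ₁ else M.μ₂) + Real.sqrt M.p • M.omegaNew a z n w

/-- Standard label vector: `-1` on class 1, `+1` on class 2. -/
def y (M : Model) (n : ℕ) : Fin n → ℝ := fun i => if (i : ℕ) < M.n₁ then -1 else 1

/-- Normalized label vector: `-1/c₁` on class 1, `+1/c₂` on class 2, `c_a = n_a/n`. -/
def ystar (M : Model) (n : ℕ) : Fin n → ℝ :=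
  fun i => if (i : ℕ) < M.n₁ then -(((M.n₁ : ℝ) / n)⁻¹) else ((M.n₂ : ℝ) / n)⁻¹

/-- Kernel matrix `K = (f(‖x_i - x_j‖²/p))_{i,j}`. -/
def K (M : Model) (f : ℝ → ℝ) (n : ℕ) (z : ℕ → ℕ → Ω → ℝ) (w : Ω) :
    Matrix (Fin n) (Fin n) ℝ :=
  Matrix.of fun i j => f (sq (M.x z (i : ℕ) w - M.x z (j : ℕ) w) / M.p)

/-- `S = K + (n/γ) I`. -/
def S (M : Model) (f : ℝ → ℝ) (γ : ℝ) (n : ℕ) (z : ℕ → ℕ → Ω → ℝ) (w : Ω) :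
    Matrix (Fin n) (Fin n) ℝ :=
  M.K f n z w + ((n : ℝ) / γ) • (1 : Matrix (Fin n) (Fin n) ℝ)

/-- Kernel vector `k(x) = (f(‖x - x_j‖²/p))_j` of a point `x₀`. -/
def k (M : Model) (f : ℝ → ℝ) (n : ℕ) (z : ℕ → ℕ → Ω → ℝ) (w : Ω) (x₀ : Fin M.p → ℝ) :
    Fin n → ℝ :=
  fun j => f (sq (x₀ - M.x z (j : ℕ) w) / M.p)

/-- Bias `b = (1ᵀ S⁻¹ yv)/(1ᵀ S⁻¹ 1)` for a label vector `yv`. -/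
def bias (M : Model) (f : ℝ → ℝ) (γ : ℝ) (n : ℕ) (yv : Fin n → ℝ)
    (z : ℕ → ℕ → Ω → ℝ) (w : Ω) : ℝ :=
  (ones n ⬝ᵥ (M.S f γ n z w)⁻¹.mulVec yv) / (ones n ⬝ᵥ (M.S f γ n z w)⁻¹.mulVec (ones n))

/-- Lagrange multipliers `α = S⁻¹ (yv - b 1)`. -/
def alpha (M : Model) (f : ℝ → ℝ) (γ : ℝ) (n : ℕ) (yv : Fin n → ℝ)
    (z : ℕ → ℕ → Ω → ℝ) (w : Ω) : Fin n → ℝ :=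
  (M.S f γ n z w)⁻¹.mulVec (yv - M.bias f γ n yv z w • ones n)

/-- LS-SVM decision function `g(x₀) = αᵀ k(x₀) + b` for label vector `yv`. -/
def g (M : Model) (f : ℝ → ℝ) (γ : ℝ) (n : ℕ) (yv : Fin n → ℝ)
    (z : ℕ → ℕ → Ω → ℝ) (w : Ω) (x₀ : Fin M.p → ℝ) : ℝ :=
  M.alpha f γ n yv z w ⬝ᵥ M.k f n z w x₀ + M.bias f γ n yv z w

/-- The matrix `Ω = [ω₁, …, ω_n] ∈ ℝ^{p×n}`. -/
def OmegaMat (M : Model) (z : ℕ → ℕ → Ω → ℝ) (n : ℕ) (w : Ω) : Matrix (Fin M.p) (Fin n) ℝ :=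
  Matrix.of fun j i => M.omega z (i : ℕ) w j

/-- The deterministic "informative" quantity `𝔇`. -/
def Dterm (M : Model) (C₁ C₂ : Matrix (Fin M.p) (Fin M.p) ℝ) (f : ℝ → ℝ) (τ : ℝ) : ℝ :=
  -(2 * deriv f τ / M.p) * sq (M.μ₂ - M.μ₁)
    + deriv (deriv f) τ / (M.p : ℝ) ^ 2 * (Matrix.trace (C₂ - C₁)) ^ 2
    + 2 * deriv (deriv f) τ / (M.p : ℝ) ^ 2 * Matrix.trace ((C₂ - C₁) * (C₂ - C₁))

/-- The random "noise" quantity `𝔓` for a new datum of class `a`. -/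
def Pterm (M : Model) (a : Fin 2) (C₁ C₂ : Matrix (Fin M.p) (Fin M.p) ℝ)
    (f : ℝ → ℝ) (τ : ℝ) (n : ℕ) (z : ℕ → ℕ → Ω → ℝ) (w : Ω) : ℝ :=
  let c₁ : ℝ := (M.n₁ : ℝ) / n;
  let c₂ : ℝ := (M.n₂ : ℝ) / n;
  let Ca : Matrix (Fin M.p) (Fin M.p) ℝ := if a = 0 then C₁ else C₂;
  let ωx : Fin M.p → ℝ := M.omegaNew a z n w;
  let ψx : ℝ := sq ωx - Matrix.trace Ca / M.p;
  -(2 * deriv f τ / n) * (M.y n ⬝ᵥ (Pmat n).mulVec ((M.OmegaMat z n w)ᵀ.mulVec ωx))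
    - (4 * c₁ * c₂ * deriv f τ / Real.sqrt M.p) * ((M.μ₂ - M.μ₁) ⬝ᵥ ωx)
    + 2 * c₁ * c₂ * deriv (deriv f) τ * ψx * (Matrix.trace (C₂ - C₁) / M.p)

/-- The random equivalent `ĝ(x)` of the decision function for a new datum of class `a`. -/
def ghat (M : Model) (a : Fin 2) (C₁ C₂ : Matrix (Fin M.p) (Fin M.p) ℝ)
    (f : ℝ → ℝ) (τ γ : ℝ) (n : ℕ) (z : ℕ → ℕ → Ω → ℝ) (w : Ω) : ℝ :=
  let c₁ : ℝ := (M.n₁ : ℝ) / n;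
  let c₂ : ℝ := (M.n₂ : ℝ) / n;
  c₂ - c₁ + γ * (M.Pterm a C₁ C₂ f τ n z w
    + (if a = 0 then -(2 * c₁ * c₂ ^ 2) else 2 * c₁ ^ 2 * c₂) * M.Dterm C₁ C₂ f τ)

/-- The asymptotic mean `E_a` of the decision function (standard labels). -/
def Emean (M : Model) (a : Fin 2) (C₁ C₂ : Matrix (Fin M.p) (Fin M.p) ℝ)
    (f : ℝ → ℝ) (τ γ : ℝ) (n : ℕ) : ℝ :=
  let c₁ : ℝ := (M.n₁ : ℝ) / n;
  let c₂ : ℝ := (M.n₂ : ℝ) / n;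
  c₂ - c₁ + (if a = 0 then -(2 * c₂) else 2 * c₁) * (c₁ * c₂) * γ * M.Dterm C₁ C₂ f τ

/-- The sum `V₁^a + V₂^a + V₃^a`. -/
def Vsum (M : Model) (a : Fin 2) (C₁ C₂ : Matrix (Fin M.p) (Fin M.p) ℝ)
    (f : ℝ → ℝ) (τ : ℝ) (n : ℕ) : ℝ :=
  let c₁ : ℝ := (M.n₁ : ℝ) / n;
  let c₂ : ℝ := (M.n₂ : ℝ) / n;
  let Ca : Matrix (Fin M.p) (Fin M.p) ℝ := if a = 0 then C₁ else C₂;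
  (deriv (deriv f) τ) ^ 2 / (M.p : ℝ) ^ 4 * (Matrix.trace (C₂ - C₁)) ^ 2
      * Matrix.trace (Ca * Ca)
    + 2 * (deriv f τ) ^ 2 / (M.p : ℝ) ^ 2 * ((M.μ₂ - M.μ₁) ⬝ᵥ Ca.mulVec (M.μ₂ - M.μ₁))
    + 2 * (deriv f τ) ^ 2 / ((n : ℝ) * (M.p : ℝ) ^ 2)
      * (Matrix.trace (C₁ * Ca) / c₁ + Matrix.trace (C₂ * Ca) / c₂)

/-- The asymptotic variance `Var_a` (standard labels). -/
def Vvar (M : Model) (a : Fin 2) (C₁ C₂ : Matrix (Fin M.p) (Fin M.p) ℝ)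
    (f : ℝ → ℝ) (τ γ : ℝ) (n : ℕ) : ℝ :=
  8 * γ ^ 2 * ((M.n₁ : ℝ) / n) ^ 2 * ((M.n₂ : ℝ) / n) ^ 2 * M.Vsum a C₁ C₂ f τ n

/-- The asymptotic mean `E*_a` (normalized labels). -/
def EmeanStar (M : Model) (a : Fin 2) (C₁ C₂ : Matrix (Fin M.p) (Fin M.p) ℝ)
    (f : ℝ → ℝ) (τ γ : ℝ) (n : ℕ) : ℝ :=
  (if a = 0 then -((M.n₂ : ℝ) / n) else (M.n₁ : ℝ) / n) * γ * M.Dterm C₁ C₂ f τ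

/-- The asymptotic variance `Var*_a` (normalized labels). -/
def VvarStar (M : Model) (a : Fin 2) (C₁ C₂ : Matrix (Fin M.p) (Fin M.p) ℝ)
    (f : ℝ → ℝ) (τ γ : ℝ) (n : ℕ) : ℝ :=
  2 * γ ^ 2 * M.Vsum a C₁ C₂ f τ n

end Model

open scoped ComplexOrder in
/-- The positive semidefinite square root of a positive semidefinite matrix
(removed from Mathlib; restored with its December 2024 definition). -/
def _root_.Matrix.PosSemidef.sqrt {n 𝕜 : Type*} [Fintype n] [DecidableEq n] [RCLike 𝕜]
    {A : Matrix n n 𝕜} (hA : A.PosSemidef) : Matrix n n 𝕜 :=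
  hA.1.eigenvectorUnitary.1 * diagonal ((↑) ∘ (√·) ∘ hA.1.eigenvalues) *
  (star hA.1.eigenvectorUnitary : Matrix n n 𝕜)

section Probability

variable {Ω ι : Type*} [MeasurableSpace Ω] {P : Measure Ω}

lemma _root_.ProbabilityTheory.HasLaw.memLp_of_gaussianReal {X : Ω → ℝ} {m : ℝ} {v : ℝ≥0}
    (hX : HasLaw X (gaussianReal m v) P) (p : ℝ≥0) : MemLp X p P := by
  have h := memLp_id_gaussianReal (μ := m) (v := v) p
  rw [← hX.map_eq] at h
  exact (memLp_map_measure_iff aestronglyMeasurable_id hX.aemeasurable).mp h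

lemma integrable_sq_sum_mul {X : ι → Ω → ℝ} (s : Finset ι) (c : ι → ℝ)
    (hX : ∀ k ∈ s, MemLp (X k) 2 P) :
    Integrable (fun ω => (∑ k ∈ s, c k * X k ω) ^ 2) P :=
  (memLp_finsetSum s fun k hk => (hX k hk).const_mul (c k)).integrable_sq

lemma integral_sq_sum_mul_of_hasLaw_gaussianReal [IsProbabilityMeasure P] {X : ι → Ω → ℝ}
    (s : Finset ι) (c : ι → ℝ) (hX : ∀ k, HasLaw (X k) (gaussianReal 0 1) P)
    (hind : Set.Pairwise ↑s fun k l => IndepFun (X k) (X l) P) :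
    ∫ ω, (∑ k ∈ s, c k * X k ω) ^ 2 ∂P = ∑ k ∈ s, c k ^ 2 := by
  have hL2 : ∀ k ∈ s, MemLp (fun ω => c k * X k ω) 2 P :=
    fun k _ => ((hX k).memLp_of_gaussianReal 2).const_mul (c k)
  have hmean : P[fun ω => ∑ k ∈ s, c k * X k ω] = 0 := by
    rw [integral_finsetSum s fun k hk => (hL2 k hk).integrable one_le_two]
    refine Finset.sum_eq_zero fun k _ => ?_
    rw [integral_const_mul, (hX k).integral_eq, integral_id_gaussianReal, mul_zero]
  have hvar := IndepFun.variance_sum (μ := P) hL2 fun k hk l hl hkl =>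
    (hind hk hl hkl).comp (measurable_const_mul (c k)) (measurable_const_mul (c l))
  rw [← variance_of_integral_eq_zero (by fun_prop) hmean]
  convert hvar using 2 with k
  · funext ω
    rw [Finset.sum_apply]
  · rw [variance_const_mul, (hX k).variance_eq, variance_id_gaussianReal]
    simp

lemma ae_tendsto_zero_of_summable_integral_sq {f : ℕ → Ω → ℝ}
    (hf : ∀ n, Integrable (fun ω => f n ω ^ 2) P)
    (hs : Summable fun n => ∫ ω, f n ω ^ 2 ∂P) :
    ∀ᵐ ω ∂P, Tendsto (fun n => f n ω) atTop (𝓝 0) := by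
  have hL1 (n : ℕ) :
      eLpNorm (fun ω => f n ω ^ 2) 1 P = ENNReal.ofReal (∫ ω, f n ω ^ 2 ∂P) := by
    rw [eLpNorm_one_eq_lintegral_enorm,
      ofReal_integral_eq_lintegral_ofReal (hf n) (ae_of_all _ fun _ => sq_nonneg _)]
    simp_rw [Real.enorm_of_nonneg (sq_nonneg _)]
  have hfin : ∑' n, eLpNorm (fun ω => f n ω ^ 2) 1 P ≠ ⊤ := by
    simp_rw [hL1, ← ENNReal.ofReal_tsum_of_nonneg
      (fun n => integral_nonneg fun _ => sq_nonneg _) hs]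
    exact ENNReal.ofReal_ne_top
  filter_upwards [summable_norm_of_tsum_eLpNorm_ne_top le_rfl (fun n => (hf n).1) hfin]
    with ω hω
  have h := (Real.continuous_sqrt.tendsto 0).comp hω.tendsto_atTop_zero
  simp only [Function.comp_def, norm_pow, Real.sqrt_sq (norm_nonneg _), Real.sqrt_zero] at h
  exact tendsto_zero_iff_norm_tendsto_zero.mpr h

end Probability

lemma summable_one_div_mul_sq_of_tendsto_div {q : ℕ → ℝ} {c : ℝ} (hc : c ≠ 0)
    (hq : Tendsto (fun n : ℕ => q n / n) atTop (𝓝 c)) :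
    Summable fun n : ℕ => 1 / (n * q n ^ 2) := by
  have hbig : (fun n : ℕ => 1 / (n : ℝ) ^ 3 * ((q n / n)⁻¹) ^ 2) =O[atTop]
      fun n : ℕ => 1 / (n : ℝ) ^ 3 * 1 :=
    (Asymptotics.isBigO_refl _ _).mul (((hq.inv₀ hc).pow 2).isBigO_one ℝ)
  refine summable_of_isBigO_nat ?_ (hbig.congr_left fun n => ?_)
  · simp
  · by_cases h : (n : ℝ) = 0 ∨ q n = 0
    · rcases h with h | h <;> simp [h]
    · obtain ⟨hn, hqn⟩ := not_or.mp h
      field_simp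

open scoped ComplexOrder in
lemma _root_.Matrix.PosSemidef.isHermitian_sqrt {n 𝕜 : Type*} [Fintype n] [DecidableEq n]
    [RCLike 𝕜] {A : Matrix n n 𝕜} (hA : A.PosSemidef) : hA.sqrt.IsHermitian := by
  simp only [Matrix.IsHermitian, Matrix.PosSemidef.sqrt, Matrix.conjTranspose_mul,
    Matrix.diagonal_conjTranspose, Matrix.mul_assoc]
  have hd : star (RCLike.ofReal ∘ (fun x => √x) ∘ hA.1.eigenvalues : n → 𝕜)
      = RCLike.ofReal ∘ (fun x => √x) ∘ hA.1.eigenvalues := by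
    funext i
    simp
  rw [hd]
  simp only [← Matrix.star_eq_conjTranspose, star_star]

open scoped ComplexOrder in
lemma _root_.Matrix.PosSemidef.sqrt_mul_self {n 𝕜 : Type*} [Fintype n] [DecidableEq n]
    [RCLike 𝕜] {A : Matrix n n 𝕜} (hA : A.PosSemidef) : hA.sqrt * hA.sqrt = A := by
  have hU : (star hA.1.eigenvectorUnitary : Matrix n n 𝕜) * hA.1.eigenvectorUnitary.1 = 1 :=
    Unitary.coe_star_mul_self _
  have hD : diagonal (((↑) ∘ (√·) ∘ hA.1.eigenvalues : n → 𝕜))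
      * diagonal ((↑) ∘ (√·) ∘ hA.1.eigenvalues)
      = diagonal (RCLike.ofReal ∘ hA.1.eigenvalues) := by
    rw [diagonal_mul_diagonal]
    congr 1
    funext v
    simp [← RCLike.ofReal_mul, Real.mul_self_sqrt (hA.eigenvalues_nonneg v)]
  conv_rhs => rw [hA.1.spectral_theorem, Unitary.conjStarAlgAut_apply]
  simp only [Matrix.PosSemidef.sqrt]
  rw [← hD]
  simp only [Matrix.mul_assoc]
  rw [← Matrix.mul_assoc (star hA.1.eigenvectorUnitary : Matrix n n 𝕜), hU, Matrix.one_mul]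

lemma sq_eq_dotProduct {m : ℕ} (v : Fin m → ℝ) : sq v = v ⬝ᵥ v := by
  simp only [sq, dotProduct, pow_two]

lemma sq_vecMul_sqrt {p : ℕ} {C : Matrix (Fin p) (Fin p) ℝ} (hC : C.PosSemidef)
    (x : Fin p → ℝ) : sq (vecMul x hC.sqrt) = x ⬝ᵥ C *ᵥ x := by
  have hsymm : hC.sqrtᵀ = hC.sqrt := by
    simpa [Matrix.IsHermitian, conjTranspose_eq_transpose_of_trivial] using hC.isHermitian_sqrt
  have hvec : vecMul x hC.sqrt = hC.sqrt *ᵥ x := by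
    rw [← mulVec_transpose, hsymm]
  rw [sq_eq_dotProduct, ← dotProduct_mulVec, hvec, mulVec_mulVec, hC.sqrt_mul_self]

open scoped RealInnerProductSpace in
lemma dotProduct_mulVec_le_opNorm_mul_sq {p : ℕ} (C : Matrix (Fin p) (Fin p) ℝ)
    (x : Fin p → ℝ) : x ⬝ᵥ C *ᵥ x ≤ ‖toEuclideanCLM (𝕜 := ℝ) C‖ * sq x := by
  set x' : EuclideanSpace ℝ (Fin p) := WithLp.toLp 2 x
  have hnorm : sq x = ‖x'‖ ^ 2 := by
    rw [EuclideanSpace.real_norm_sq_eq]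
    rfl
  rw [← inner_toEuclideanCLM C x' x', hnorm]
  calc ⟪x', toEuclideanCLM (𝕜 := ℝ) C x'⟫
      ≤ ‖x'‖ * ‖toEuclideanCLM (𝕜 := ℝ) C x'‖ := real_inner_le_norm _ _
    _ ≤ ‖x'‖ * (‖toEuclideanCLM (𝕜 := ℝ) C‖ * ‖x'‖) := by
        gcongr
        exact (toEuclideanCLM (𝕜 := ℝ) C).le_opNorm x'
    _ = ‖toEuclideanCLM (𝕜 := ℝ) C‖ * ‖x'‖ ^ 2 := by ring

namespace Model

variable {Ω : Type*} (m : Model)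

def sqrtCov (i : ℕ) : Matrix (Fin m.p) (Fin m.p) ℝ := if i < m.n₁ then m.R₁ else m.R₂

def classWeight (n i : ℕ) : ℝ := if i < m.n₁ then -((m.n₂ : ℝ) / n) else (m.n₁ : ℝ) / n

def kappaCoeff (n : ℕ) (k : ℕ × Fin m.p) : ℝ :=
  4 * m.classWeight n k.1 / (n * m.p) * vecMul (m.μ₂ - m.μ₁) (m.sqrtCov k.1) k.2

lemma dotProduct_omega (v : Fin m.p → ℝ) (z : ℕ → ℕ → Ω → ℝ) (i : ℕ) (w : Ω) :
    v ⬝ᵥ m.omega z i w = (√m.p)⁻¹ * ∑ j, vecMul v (m.sqrtCov i) j * z i j w := by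
  rw [omega, dotProduct_smul, smul_eq_mul, dotProduct_mulVec]
  rfl

lemma sum_range_classWeight_mul {n : ℕ} (hn : m.n₁ ≤ n) (g : ℕ → ℝ) :
    ∑ i ∈ range n, m.classWeight n i * g i
      = -((m.n₂ : ℝ) / n) * ∑ i ∈ range m.n₁, g i + (m.n₁ : ℝ) / n * ∑ i ∈ Ico m.n₁ n, g i := by
  rw [← sum_range_add_sum_Ico _ hn, mul_sum, mul_sum]
  congr 1
  · refine sum_congr rfl fun i hi => ?_
    rw [classWeight, if_pos (mem_range.mp hi)]
  · refine sum_congr rfl fun i hi => ?_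
    rw [classWeight, if_neg (not_lt.mpr (mem_Ico.mp hi).1)]

lemma kappa_eq_sum_kappaCoeff (z : ℕ → ℕ → Ω → ℝ) {n : ℕ} (hn : m.n₁ ≤ n) (w : Ω) :
    4 / ((n : ℝ) * √m.p) *
        ((m.μ₂ - m.μ₁) ⬝ᵥ
          (-(((m.n₂ : ℝ) / n) • ∑ i ∈ range m.n₁, m.omega z i w)
            + ((m.n₁ : ℝ) / n) • ∑ i ∈ Ico m.n₁ n, m.omega z i w))
      = ∑ k ∈ range n ×ˢ univ, m.kappaCoeff n k * z k.1 k.2 w := by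
  have hrow (i : ℕ) : ∑ j, m.kappaCoeff n (i, j) * z i j w
      = 4 / ((n : ℝ) * √m.p) * (m.classWeight n i * ((m.μ₂ - m.μ₁) ⬝ᵥ m.omega z i w)) := by
    rw [dotProduct_omega, mul_sum, mul_sum, mul_sum]
    refine sum_congr rfl fun j _ => ?_
    have hp : (0 : ℝ) < m.p := by exact_mod_cast j.pos
    simp only [kappaCoeff]
    field_simp
    rw [Real.sq_sqrt hp.le]
    ring
  rw [sum_product, sum_congr rfl fun i _ => hrow i, ← mul_sum, sum_range_classWeight_mul m hn,
    dotProduct_add, dotProduct_neg, dotProduct_smul, dotProduct_smul, dotProduct_sum,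
    dotProduct_sum, smul_eq_mul, smul_eq_mul, neg_mul]

lemma classWeight_sq_le_one {n : ℕ} (hn : m.n₁ + m.n₂ = n) (i : ℕ) :
    m.classWeight n i ^ 2 ≤ 1 := by
  have h₁ : (m.n₁ : ℝ) / n ≤ 1 :=
    div_le_one_of_le₀ (by exact_mod_cast hn ▸ le_self_add) (by positivity)
  have h₂ : (m.n₂ : ℝ) / n ≤ 1 :=
    div_le_one_of_le₀ (by exact_mod_cast hn ▸ le_add_self) (by positivity)
  have h₁' : 0 ≤ (m.n₁ : ℝ) / n := by positivity
  have h₂' : 0 ≤ (m.n₂ : ℝ) / n := by positivity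
  unfold classWeight
  split_ifs <;> nlinarith

variable {m} {C₁ C₂ : Matrix (Fin m.p) (Fin m.p) ℝ} {B : ℝ}

lemma sq_vecMul_sqrtCov_le (hC₁ : C₁.PosSemidef) (hC₂ : C₂.PosSemidef)
    (hR₁ : m.R₁ = hC₁.sqrt) (hR₂ : m.R₂ = hC₂.sqrt)
    (hB₁ : ‖toEuclideanCLM (𝕜 := ℝ) C₁‖ ≤ B) (hB₂ : ‖toEuclideanCLM (𝕜 := ℝ) C₂‖ ≤ B)
    (v : Fin m.p → ℝ) (i : ℕ) :
    sq (vecMul v (m.sqrtCov i)) ≤ B * sq v := by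
  have hv : 0 ≤ sq v := sum_nonneg fun _ _ => sq_nonneg _
  unfold sqrtCov
  split_ifs
  · rw [hR₁, sq_vecMul_sqrt]
    exact (dotProduct_mulVec_le_opNorm_mul_sq _ _).trans (mul_le_mul_of_nonneg_right hB₁ hv)
  · rw [hR₂, sq_vecMul_sqrt]
    exact (dotProduct_mulVec_le_opNorm_mul_sq _ _).trans (mul_le_mul_of_nonneg_right hB₂ hv)

lemma sum_sq_kappaCoeff_le {n : ℕ} (hn : m.n₁ + m.n₂ = n)
    (hC₁ : C₁.PosSemidef) (hC₂ : C₂.PosSemidef)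
    (hR₁ : m.R₁ = hC₁.sqrt) (hR₂ : m.R₂ = hC₂.sqrt)
    (hB₁ : ‖toEuclideanCLM (𝕜 := ℝ) C₁‖ ≤ B) (hB₂ : ‖toEuclideanCLM (𝕜 := ℝ) C₂‖ ≤ B)
    {Bμ : ℝ} (hμ : sq (m.μ₂ - m.μ₁) ≤ Bμ) :
    ∑ k ∈ range n ×ˢ univ, m.kappaCoeff n k ^ 2 ≤ 16 * (B * Bμ) * (1 / (n * (m.p : ℝ) ^ 2)) := by
  have hrow (i : ℕ) : ∑ j, m.kappaCoeff n (i, j) ^ 2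
      = (4 / (n * m.p)) ^ 2 * m.classWeight n i ^ 2
          * sq (vecMul (m.μ₂ - m.μ₁) (m.sqrtCov i)) := by
    simp only [kappaCoeff, sq, mul_sum]
    exact sum_congr rfl fun j _ => by ring
  have hB : 0 ≤ B := (norm_nonneg _).trans hB₁
  calc ∑ k ∈ range n ×ˢ univ, m.kappaCoeff n k ^ 2
      = ∑ i ∈ range n, (4 / (n * m.p)) ^ 2 * m.classWeight n i ^ 2
          * sq (vecMul (m.μ₂ - m.μ₁) (m.sqrtCov i)) := by
        rw [sum_product]
        exact sum_congr rfl fun i _ => hrow i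
    _ ≤ ∑ i ∈ range n, (4 / (n * m.p)) ^ 2 * 1 * (B * Bμ) := by
        gcongr with i
        · exact sum_nonneg fun _ _ => sq_nonneg _
        · exact m.classWeight_sq_le_one hn i
        · exact (sq_vecMul_sqrtCov_le hC₁ hC₂ hR₁ hR₂ hB₁ hB₂ _ i).trans
            (mul_le_mul_of_nonneg_left hμ hB)
    _ = 16 * (B * Bμ) * (1 / (n * (m.p : ℝ) ^ 2)) := by
        rw [sum_const, card_range, nsmul_eq_mul]
        by_cases h : (n : ℝ) = 0 ∨ (m.p : ℝ) = 0
        · rcases h with h | h <;> simp [h]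
        · obtain ⟨hn, hp⟩ := not_or.mp h
          field_simp
          ring

end Model

theorem statement10_general
    {Ω : Type*} [MeasurableSpace Ω] (P : Measure Ω) [IsProbabilityMeasure P]
    (z : ℕ → ℕ → Ω → ℝ)
    (hz_meas : ∀ i j, Measurable (z i j))
    (hz_indep : iIndepFun
      (fun ij : ℕ × ℕ => z ij.1 ij.2) P)
    (hz_gauss : ∀ i j, Measure.map (z i j) P = gaussianReal 0 1)
    (M : ℕ → Model)
    (C₁ C₂ : (n : ℕ) → Matrix (Fin (M n).p) (Fin (M n).p) ℝ)
    (hC₁ : ∀ n, (C₁ n).PosSemidef) (hC₂ : ∀ n, (C₂ n).PosSemidef)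
    (hR₁ : ∀ n, (M n).R₁ = (hC₁ n).sqrt) (hR₂ : ∀ n, (M n).R₂ = (hC₂ n).sqrt)
    (hsize : ∀ n, (M n).n₁ + (M n).n₂ = n)
    (c0 : ℝ) (hc0 : 0 < c0)
    (hp : Tendsto (fun n : ℕ => ((M n).p : ℝ) / n) atTop (nhds c0))
    (hμ : ∃ B : ℝ, ∀ n, sq ((M n).μ₂ - (M n).μ₁) ≤ B)
    (hCb₁ : ∃ B : ℝ, ∀ n, ‖Matrix.toEuclideanCLM (𝕜 := ℝ) (C₁ n)‖ ≤ B)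
    (hCb₂ : ∃ B : ℝ, ∀ n, ‖Matrix.toEuclideanCLM (𝕜 := ℝ) (C₂ n)‖ ≤ B) :
    ∀ᵐ w ∂P, Tendsto
      (fun n : ℕ => 4 / ((n : ℝ) * Real.sqrt ((M n).p)) *
        (((M n).μ₂ - (M n).μ₁) ⬝ᵥ
          (-((((M n).n₂ : ℝ) / n) • ∑ i ∈ Finset.range (M n).n₁, (M n).omega z i w)
            + (((M n).n₁ : ℝ) / n) • ∑ i ∈ Finset.Ico (M n).n₁ n, (M n).omega z i w)))
      atTop (nhds 0) := by
  obtain ⟨Bμ, hBμ⟩ := hμ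
  obtain ⟨B₁, hB₁⟩ := hCb₁
  obtain ⟨B₂, hB₂⟩ := hCb₂
  have hlaw (i j : ℕ) : HasLaw (z i j) (gaussianReal 0 1) P :=
    ⟨(hz_meas i j).aemeasurable, hz_gauss i j⟩
  have hindep (n : ℕ) {k l : ℕ × Fin (M n).p} (hkl : k ≠ l) :
      IndepFun (z k.1 k.2) (z l.1 l.2) P := by
    have hinj : Function.Injective (Prod.map (id : ℕ → ℕ) (Fin.val : Fin (M n).p → ℕ)) :=
      Function.injective_id.prodMap Fin.val_injective
    exact (hz_indep.precomp hinj).indepFun hkl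
  have hmoment (n : ℕ) :
      ∫ w, (∑ k ∈ range n ×ˢ univ, (M n).kappaCoeff n k * z k.1 k.2 w) ^ 2 ∂P
        = ∑ k ∈ range n ×ˢ univ, (M n).kappaCoeff n k ^ 2 :=
    integral_sq_sum_mul_of_hasLaw_gaussianReal _ _ (fun k => hlaw k.1 k.2)
      fun _ _ _ _ => hindep n
  have hsummable : Summable fun n => ∫ w,
      (∑ k ∈ range n ×ˢ univ, (M n).kappaCoeff n k * z k.1 k.2 w) ^ 2 ∂P := by
    simp_rw [hmoment]
    exact .of_nonneg_of_le (fun n => sum_nonneg fun _ _ => sq_nonneg _)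
      (fun n => Model.sum_sq_kappaCoeff_le (hsize n) (hC₁ n) (hC₂ n) (hR₁ n) (hR₂ n)
        ((hB₁ n).trans (le_max_left B₁ B₂)) ((hB₂ n).trans (le_max_right B₁ B₂)) (hBμ n))
      ((summable_one_div_mul_sq_of_tendsto_div hc0.ne' hp).mul_left _)
  filter_upwards [ae_tendsto_zero_of_summable_integral_sq (fun n => integrable_sq_sum_mul _ _
    fun k _ => (hlaw k.1 k.2).memLp_of_gaussianReal 2) hsummable] with w hw
  exact hw.congr fun n => ((M n).kappa_eq_sum_kappaCoeff z (Nat.le.intro (hsize n)) w).symm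

/-- The cross term `κ_n` converges to `0` almost surely. -/
theorem statement10
    {Ω : Type*} [MeasurableSpace Ω] (P : Measure Ω) [IsProbabilityMeasure P]
    (z : ℕ → ℕ → Ω → ℝ)
    (hz_meas : ∀ i j, Measurable (z i j))
    (hz_indep : iIndepFun
      (fun ij : ℕ × ℕ => z ij.1 ij.2) P)
    (hz_gauss : ∀ i j, Measure.map (z i j) P = gaussianReal 0 1)
    (M : ℕ → Model)
    (C₁ C₂ : (n : ℕ) → Matrix (Fin (M n).p) (Fin (M n).p) ℝ)
    (hC₁ : ∀ n, (C₁ n).PosSemidef) (hC₂ : ∀ n, (C₂ n).PosSemidef)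
    (hR₁ : ∀ n, (M n).R₁ = (hC₁ n).sqrt) (hR₂ : ∀ n, (M n).R₂ = (hC₂ n).sqrt)
    (hsize : ∀ n, (M n).n₁ + (M n).n₂ = n)
    (c0 : ℝ) (hc0 : 0 < c0)
    (hp : Tendsto (fun n : ℕ => ((M n).p : ℝ) / n) atTop (nhds c0))
    (c1 c2 : ℝ) (hc1 : 0 < c1) (hc2 : 0 < c2)
    (hn1 : Tendsto (fun n : ℕ => ((M n).n₁ : ℝ) / n) atTop (nhds c1))
    (hn2 : Tendsto (fun n : ℕ => ((M n).n₂ : ℝ) / n) atTop (nhds c2))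
    (hμ : ∃ B : ℝ, ∀ n, sq ((M n).μ₂ - (M n).μ₁) ≤ B)
    (hCb₁ : ∃ B : ℝ, ∀ n, ‖Matrix.toEuclideanCLM (𝕜 := ℝ) (C₁ n)‖ ≤ B)
    (hCb₂ : ∃ B : ℝ, ∀ n, ‖Matrix.toEuclideanCLM (𝕜 := ℝ) (C₂ n)‖ ≤ B)
    (htr : Asymptotics.IsBigO atTop (fun n : ℕ => Matrix.trace (C₂ n - C₁ n))
      (fun n : ℕ => Real.sqrt n))
    (τ : ℝ) (hτ : 0 < τ)
    (htau : Tendsto (fun n : ℕ => 2 / ((M n).p : ℝ) *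
        Matrix.trace ((((M n).n₁ : ℝ) / n) • C₁ n + (((M n).n₂ : ℝ) / n) • C₂ n))
      atTop (nhds τ)) :
    ∀ᵐ w ∂P, Tendsto
      (fun n : ℕ => 4 / ((n : ℝ) * Real.sqrt ((M n).p)) *
        (((M n).μ₂ - (M n).μ₁) ⬝ᵥ
          (-((((M n).n₂ : ℝ) / n) • ∑ i ∈ Finset.range (M n).n₁, (M n).omega z i w)
            + (((M n).n₁ : ℝ) / n) • ∑ i ∈ Finset.Ico (M n).n₁ n, (M n).omega z i w)))
      atTop (nhds 0) :=
  statement10_general P z hz_meas hz_indep hz_gauss M C₁ C₂ hC₁ hC₂ hR₁ hR₂ hsize c0 hc0 hp hμ hCb₁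
    hCb₂

end LSSVM
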